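/- Let U be a finite closed set of Lyndon words on X = {x_1, ..., x_n} with #U = d, where each letter has degree 1 and the degree of a word is its length. Then the sum of the degrees of the elements of U satisfies Σ_{u∈U} deg(u) ≤ (φ^{d−n+4} − ψ^{d−n+4})/(φ − ψ) + n − 3, where φ = (1+√5)/2 and ψ = (1−√5)/2. -/

import Mathlib

variable {X : Type*} [LinearOrder X]

/-- The lexicographical order of the paper: `u <_lex v` iff the words first differ with the
letter of `u` smaller, or `v` is a proper prefix of `u`. -/
def LexLt (u v : List X) : Prop :=
  (∃ (r s t : List X) (a b : X), a < b ∧ u = r ++ a :: s ∧ v = r ++ b :: t) ∨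
    (v <+: u ∧ v ≠ u)

/-- A word `u` is Lyndon if it is nonempty and `u >_lex w ++ v` for every factorization
`u = v ++ w` with `v, w` nonempty. -/
def IsLyndon (u : List X) : Prop :=
  u ≠ [] ∧ ∀ v w : List X, u = v ++ w → v ≠ [] → w ≠ [] → LexLt (w ++ v) u

/-- A set `U` of Lyndon words is closed if it contains all letters and every Lyndon factor
of a word in `U`. -/
def IsClosedSet (U : Set (List X)) : Prop :=
  (∀ u ∈ U, IsLyndon u) ∧ (∀ a : X, [a] ∈ U) ∧
    ∀ w ∈ U, ∀ v : List X, IsLyndon v → v <:+: w → v ∈ U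

def LtD (u v : List X) : Prop :=
  ∃ (r s t : List X) (a b : X), a < b ∧ u = r ++ a :: s ∧ v = r ++ b :: t

def wkey (u : List X) : List (WithTop X) := u.map (fun a => (a : WithTop X)) ++ [⊤]

lemma wkey_append (u v : List X) :
    wkey (u ++ v) = u.map (fun a => (a : WithTop X)) ++ wkey v := by
  simp [wkey]

lemma wkey_lt_of_lexLt {u v : List X} (h : LexLt u v) : wkey u < wkey v := by
  show List.Lex (· < ·) (wkey u) (wkey v)
  rcases h with ⟨r, s, t, a, b, hab, h1, h2⟩ | ⟨⟨z, hz⟩, h2⟩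
  · subst h1 h2
    rw [wkey_append, wkey_append]
    refine List.Lex.append_left _ ?_ _
    exact List.Lex.rel (show ((a:WithTop X)) < (b:WithTop X) by exact_mod_cast hab)
  · subst hz
    rw [wkey_append]
    have hzne : z ≠ [] := by rintro rfl; simp at h2
    conv_rhs => rw [show wkey v = v.map (fun a => (a : WithTop X)) ++ [⊤] from rfl]
    refine List.Lex.append_left _ ?_ _
    cases z with
    | nil => exact absurd rfl hzne
    | cons c z' =>
      rw [show wkey (c :: z') = (c : WithTop X) :: wkey z' from rfl]
      exact List.Lex.rel (WithTop.coe_lt_top c)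

lemma lexLt_cons {u v : List X} (a : X) (h : LexLt u v) : LexLt (a :: u) (a :: v) := by
  rcases h with ⟨r, s, t, x, y, hxy, h1, h2⟩ | ⟨h1, h2⟩
  · exact Or.inl ⟨a :: r, s, t, x, y, hxy, by simp [h1], by simp [h2]⟩
  · exact Or.inr ⟨List.cons_prefix_cons.mpr ⟨rfl, h1⟩, fun h => h2 (by injection h)⟩

lemma lexLt_total (u v : List X) : u = v ∨ LexLt u v ∨ LexLt v u := by
  induction u generalizing v with
  | nil =>
    cases v with
    | nil => exact Or.inl rfl
    | cons b t => exact Or.inr (Or.inr (Or.inr ⟨List.nil_prefix, by simp⟩))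
  | cons a s ih =>
    cases v with
    | nil => exact Or.inr (Or.inl (Or.inr ⟨List.nil_prefix, by simp⟩))
    | cons b t =>
      rcases lt_trichotomy a b with hab | rfl | hab
      · exact Or.inr (Or.inl (Or.inl ⟨[], s, t, a, b, hab, rfl, rfl⟩))
      · rcases ih t with rfl | h | h
        · exact Or.inl rfl
        · exact Or.inr (Or.inl (lexLt_cons a h))
        · exact Or.inr (Or.inr (lexLt_cons a h))
      · exact Or.inr (Or.inr (Or.inl ⟨[], t, s, b, a, hab, rfl, rfl⟩))

lemma lexLt_iff_wkey {u v : List X} : LexLt u v ↔ wkey u < wkey v := by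
  refine ⟨wkey_lt_of_lexLt, fun h => ?_⟩
  rcases lexLt_total u v with rfl | h' | h'
  · exact absurd h (lt_irrefl _)
  · exact h'
  · exact absurd h (asymm (wkey_lt_of_lexLt h'))

lemma lexLt_irrefl (u : List X) : ¬ LexLt u u := by
  rw [lexLt_iff_wkey]; exact lt_irrefl _

lemma lexLt_asymm {u v : List X} (h : LexLt u v) : ¬ LexLt v u := by
  rw [lexLt_iff_wkey] at *; exact asymm h

lemma wkey_inj : Function.Injective (wkey (X := X)) := by
  intro u v h
  rcases lexLt_total u v with rfl | h' | h'
  · rfl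
  · exact absurd (h ▸ wkey_lt_of_lexLt h') (lt_irrefl _)
  · exact absurd (h ▸ wkey_lt_of_lexLt h') (lt_irrefl _)

lemma ltd_lexLt {u v : List X} (h : LtD u v) : LexLt u v := Or.inl h

lemma ltd_of_lexLt_length {u v : List X} (h : LexLt u v) (hl : u.length = v.length) :
    LtD u v := by
  rcases h with h | ⟨h1, h2⟩
  · exact h
  · exact absurd (h1.eq_of_length (by omega)) h2

lemma ltd_append {u v x y : List X} (h : LtD u v) : LtD (u ++ x) (v ++ y) := by
  obtain ⟨r, s, t, a, b, hab, h1, h2⟩ := h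
  exact ⟨r, s ++ x, t ++ y, a, b, hab, by simp [h1], by simp [h2]⟩

lemma ltd_cancel {c u v : List X} (h : LtD (c ++ u) (c ++ v)) : LtD u v := by
  induction c with
  | nil => simpa using h
  | cons x c ih =>
    apply ih
    obtain ⟨r, s, t, a, b, hab, h1, h2⟩ := h
    cases r with
    | nil =>
      simp only [List.nil_append, List.cons_append, List.cons.injEq] at h1 h2
      exact absurd hab (by rw [← h1.1, ← h2.1]; exact lt_irrefl x)
    | cons x' r' =>
      simp only [List.cons_append, List.cons.injEq] at h1 h2
      exact ⟨r', s, t, a, b, hab, h1.2, h2.2⟩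

lemma ltd_split {s x u y : List X} (h : LtD (s ++ x) (u ++ y)) (hl : s.length ≤ u.length) :
    LtD s u ∨ s <+: u := by
  obtain ⟨r, s1, t, a, b, hab, h1, h2⟩ := h
  by_cases hrs : r.length < s.length
  · left
    have hrpre : r <+: s := by
      refine List.prefix_of_prefix_length_le ?_ (List.prefix_append s x) (by omega)
      rw [h1]; exact List.prefix_append r _
    obtain ⟨z, rfl⟩ := hrpre
    have hz : z ++ x = a :: s1 := by
      rw [List.append_assoc] at h1
      exact List.append_cancel_left h1
    have hrpre2 : r <+: u := by
      refine List.prefix_of_prefix_length_le ?_ (List.prefix_append u y) (by omega)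
      rw [h2]; exact List.prefix_append r _
    obtain ⟨w, rfl⟩ := hrpre2
    have hw : w ++ y = b :: t := by
      rw [List.append_assoc] at h2
      exact List.append_cancel_left h2
    cases z with
    | nil => simp at hrs
    | cons a' z' =>
      cases w with
      | nil => exfalso; simp only [List.length_append, List.length_cons, List.length_nil] at hl hrs; omega
      | cons b' w' =>
        simp only [List.cons_append, List.cons.injEq] at hz hw
        exact ⟨r, z', w', a', b', hz.1 ▸ hw.1 ▸ hab, rfl, rfl⟩
  · right
    have h3 : s <+: r := by
      refine List.prefix_of_prefix_length_le (List.prefix_append s x) ?_ (by omega)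
      rw [h1]; exact List.prefix_append r _
    refine List.prefix_of_prefix_length_le (h3.trans ?_) (List.prefix_append u y) hl
    rw [h2]; exact List.prefix_append r _

lemma lyndon_suffix {w s : List X} (hw : IsLyndon w) (hs : s <:+ w) (hne : s ≠ [])
    (hsw : s ≠ w) : LtD s w := by
  obtain ⟨u, rfl⟩ := hs
  have hu : u ≠ [] := by rintro rfl; simp at hsw
  have h1 : LexLt (s ++ u) (u ++ s) := hw.2 u s rfl hu hne
  have h2 : LtD (s ++ u) (u ++ s) :=
    ltd_of_lexLt_length h1 (by simp [Nat.add_comm])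
  have h2' : LtD (s ++ u) ((u ++ s) ++ []) := by simpa using h2
  rcases ltd_split h2' (by simp) with h3 | h3
  · exact h3
  · exfalso
    obtain ⟨t, hts⟩ := h3
    have ht : t ≠ [] := by
      rintro rfl
      rw [List.append_nil] at hts
      have h9 := congrArg List.length hts
      rw [List.length_append] at h9
      exact hu (List.eq_nil_of_length_eq_zero (by omega))
    have h4 : LexLt (t ++ s) (u ++ s) := hw.2 s t hts.symm hne ht
    have h5 : LtD (t ++ s) (u ++ s) := ltd_of_lexLt_length h4 (by
      have h9 := congrArg List.length hts
      rw [List.length_append, List.length_append] at h9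
      rw [List.length_append, List.length_append]
      omega)
    have h6 : LtD (s ++ u) (s ++ t) := by rw [hts]; exact h2
    have h7 : LtD (u ++ s) (t ++ s) := ltd_append (ltd_cancel h6)
    exact absurd (wkey_lt_of_lexLt (ltd_lexLt h5))
      (asymm (wkey_lt_of_lexLt (ltd_lexLt h7)))

lemma lyndon_of_suffix {w : List X} (hne : w ≠ [])
    (h : ∀ s, s <:+ w → s ≠ [] → s ≠ w → LexLt s w) : IsLyndon w := by
  refine ⟨hne, fun v u huv hv hu => ?_⟩
  have hsuf : u <:+ w := ⟨v, huv.symm⟩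
  have hune : u ≠ w := by
    intro he
    rw [he] at huv
    have h9 := congrArg List.length huv
    rw [List.length_append] at h9
    have hvl : 0 < v.length := List.length_pos_iff.mpr hv
    omega
  have h1 : LexLt u w := h u hsuf hu hune
  have h2 : LtD u w := by
    rcases h1 with h1 | ⟨h1, _⟩
    · exact h1
    · exfalso
      have hl := h1.length_le
      have h9 := congrArg List.length huv
      rw [List.length_append] at h9
      have hvl : 0 < v.length := List.length_pos_iff.mpr hv
      omega
  have h3 : LtD (u ++ v) (w ++ []) := ltd_append h2
  rw [List.append_nil] at h3
  exact ltd_lexLt h3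

lemma lyndon_singleton (a : X) : IsLyndon [a] := by
  refine ⟨by simp, fun v u huv hv hu => ?_⟩
  exfalso
  have h9 := congrArg List.length huv
  rw [List.length_append] at h9
  have hvl : 0 < v.length := List.length_pos_iff.mpr hv
  have hul : 0 < u.length := List.length_pos_iff.mpr hu
  simp at h9
  omega

lemma exists_factorization {w : List X} (hw : IsLyndon w) (hw2 : 2 ≤ w.length) :
    ∃ u v : List X, IsLyndon u ∧ IsLyndon v ∧ u ≠ [] ∧ v ≠ [] ∧ w = u ++ v := by
  classical
  set S : List (List X) := w.tails.filter (fun s => decide (s ≠ [] ∧ s ≠ w)) with hSdef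
  have hmemS : ∀ s : List X, s ∈ S ↔ (s <:+ w ∧ s ≠ [] ∧ s ≠ w) := by
    intro s
    simp [hSdef, List.mem_filter, List.mem_tails, and_assoc]
  have hSne : w.drop 1 ∈ S := by
    rw [hmemS]
    refine ⟨List.drop_suffix 1 w, ?_, ?_⟩
    · intro h
      have := congrArg List.length h
      simp at this
      omega
    · intro h
      have := congrArg List.length h
      simp at this
      omega
  obtain ⟨v, hv⟩ : ∃ v, v ∈ S.argmax wkey := by
    cases h : S.argmax wkey with
    | none => exact absurd (List.argmax_eq_none.mp h ▸ hSne) List.not_mem_nil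
    | some v => exact ⟨v, rfl⟩
  have hvS := (hmemS v).mp (List.argmax_mem hv)
  obtain ⟨⟨u, rfl⟩, hvne, hvw⟩ := hvS
  have hmax : ∀ t, t ∈ S → wkey t ≤ wkey v := fun t ht => List.le_of_mem_argmax ht (by convert hv)
  have hune : u ≠ [] := by rintro rfl; simp at hvw
  -- v is Lyndon
  have hvlyn : IsLyndon v := by
    refine lyndon_of_suffix hvne fun t htv htne htnv => ?_
    have htS : t ∈ S := by
      rw [hmemS]
      refine ⟨htv.trans (List.suffix_append u v), htne, ?_⟩
      intro h
      have h1 := htv.length_le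
      have h2 := congrArg List.length h
      rw [List.length_append] at h2
      have : 0 < u.length := List.length_pos_iff.mpr hune
      omega
    have := hmax t htS
    have hne' : wkey t ≠ wkey v := fun h => htnv (wkey_inj h)
    exact lexLt_iff_wkey.mpr (lt_of_le_of_ne this hne')
  -- u is Lyndon
  have hulyn : IsLyndon u := by
    refine lyndon_of_suffix hune fun s hsu hsne hsnu => ?_
    obtain ⟨u₀, rfl⟩ := hsu
    have hu₀ : u₀ ≠ [] := by rintro rfl; simp at hsnu
    have hsvS : s ++ v <:+ (u₀ ++ s) ++ v := ⟨u₀, by simp⟩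
    have hsvne : s ++ v ≠ [] := by simp [hvne]
    have hsvnw : s ++ v ≠ (u₀ ++ s) ++ v := by
      intro h
      have h9 := congrArg List.length h
      simp only [List.length_append] at h9
      exact hu₀ (List.eq_nil_of_length_eq_zero (by omega))
    have hsd : LtD (s ++ v) ((u₀ ++ s) ++ v) := lyndon_suffix hw hsvS hsvne hsvnw
    rcases ltd_split hsd (by simp) with h | h
    · exact ltd_lexLt h
    · exfalso
      obtain ⟨u', hu'⟩ := h
      have hu'ne : u' ≠ [] := by
        rintro rfl
        rw [List.append_nil] at hu'
        exact hsnu hu'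
      have hw' : (u₀ ++ s) ++ v = s ++ (u' ++ v) := by rw [← hu', List.append_assoc]
      have hcan : LtD v (u' ++ v) := by
        apply ltd_cancel (c := s)
        rw [← hw']
        exact hsd
      have hu'vS : u' ++ v ∈ S := by
        rw [hmemS]
        refine ⟨⟨s, hw'.symm⟩, by simp [hvne], ?_⟩
        intro h
        have h9 := congrArg List.length h
        simp only [List.length_append] at h9
        have h8 : 0 < s.length := List.length_pos_iff.mpr hsne
        have h7 := congrArg List.length hu'
        simp only [List.length_append] at h7
        omega
      exact absurd (wkey_lt_of_lexLt (ltd_lexLt hcan)) (not_lt.mpr (hmax _ hu'vS))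
  exact ⟨u, v, hulyn, hvlyn, hune, hvne, rfl⟩

/-- deglex key: degree first, then the word order. -/
def Kord (w : List X) : ℕ ×ₗ List (WithTop X) := toLex (w.length, wkey w)

lemma Kord_inj : Function.Injective (Kord (X := X)) := by
  intro u v h
  have h' : (u.length, wkey u) = (v.length, wkey v) := toLex.injective h
  exact wkey_inj (congrArg Prod.snd h')

lemma Kord_lt_of_length {u v : List X} (h : u.length < v.length) : Kord u < Kord v :=
  Prod.Lex.lt_iff.mpr (Or.inl h)

lemma lyndon_not_square {u : List X} (h : IsLyndon (u ++ u)) (hu : u ≠ []) : False :=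
  lexLt_irrefl (u ++ u) (h.2 u u rfl hu hu)

section counting

variable (T : Finset (List X))

/-- rank of `w` in `T` w.r.t. deglex. -/
def rk (w : List X) : ℕ := (T.filter (fun x => Kord x < Kord w)).card

lemma rk_lt_rk {z y : List X} (hz : z ∈ T) (hzy : Kord z < Kord y) :
    rk T z < rk T y := by
  have hsub : T.filter (fun x => Kord x < Kord z) ⊆
      (T.filter (fun x => Kord x < Kord y)).erase z := by
    intro x hx
    rw [Finset.mem_filter] at hx
    refine Finset.mem_erase.mpr ⟨?_, Finset.mem_filter.mpr ⟨hx.1, hx.2.trans hzy⟩⟩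
    rintro rfl
    exact absurd hx.2 (lt_irrefl _)
  have hzmem : z ∈ T.filter (fun x => Kord x < Kord y) :=
    Finset.mem_filter.mpr ⟨hz, hzy⟩
  calc rk T z ≤ ((T.filter (fun x => Kord x < Kord y)).erase z).card :=
        Finset.card_le_card hsub
    _ < (T.filter (fun x => Kord x < Kord y)).card :=
        Finset.card_erase_lt_of_mem hzmem
  
lemma rk_le_of_mem {w : List X} (hw : w ∈ T) : rk T w + 1 ≤ T.card := by
  have hsub : T.filter (fun x => Kord x < Kord w) ⊆ T.erase w := by
    intro x hx
    rw [Finset.mem_filter] at hx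
    exact Finset.mem_erase.mpr ⟨fun h => absurd (h ▸ hx.2) (lt_irrefl _), hx.1⟩
  have h1 := Finset.card_le_card hsub
  have h2 : (T.erase w).card = T.card - 1 := Finset.card_erase_of_mem hw
  have h3 : 0 < T.card := Finset.card_pos.mpr ⟨w, hw⟩
  unfold rk
  omega

end counting

lemma length_le_fib [Fintype X] {n : ℕ} (hn : Fintype.card X = n) {U : Set (List X)}
    (hU : IsClosedSet U) (hfin : U.Finite) :
    ∀ w ∈ U, w.length ≤ Nat.fib (rk hfin.toFinset w - (n - 2) + 1) := by
  classical
  set T := hfin.toFinset with hT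
  have hmemT : ∀ x : List X, x ∈ T ↔ x ∈ U := fun x => Set.Finite.mem_toFinset hfin
  suffices H : ∀ m : ℕ, ∀ w ∈ U, w.length = m →
      w.length ≤ Nat.fib (rk T w - (n - 2) + 1) by
    intro w hw; exact H w.length w hw rfl
  intro m
  induction m using Nat.strong_induction_on with
  | _ m ih =>
    intro w hw hlen
    by_cases hm2 : w.length ≤ 1
    · have : 0 < Nat.fib (rk T w - (n - 2) + 1) := Nat.fib_pos.mpr (by omega)
      omega
    · obtain ⟨u, v, hulyn, hvlyn, hune, hvne, rfl⟩ :=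
        exists_factorization (hU.1 w hw) (by omega)
      have hu : u ∈ U := hU.2.2 _ hw u hulyn (List.prefix_append u v).isInfix
      have hv : v ∈ U := hU.2.2 _ hw v hvlyn (List.suffix_append u v).isInfix
      have huv : u ≠ v := by
        intro h
        refine lyndon_not_square (u := u) ?_ hune
        rw [show u ++ u = u ++ v by rw [h]]
        exact hU.1 _ hw
      have hul : 0 < u.length := List.length_pos_iff.mpr hune
      have hvl : 0 < v.length := List.length_pos_iff.mpr hvne
      have hlen' : u.length + v.length = m := by
        rw [← hlen, List.length_append]
      have hKne : Kord u ≠ Kord v := fun h => huv (Kord_inj h)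
      have hletters : n ≤ rk T (u ++ v) := by
        rw [← hn, ← Finset.card_univ]
        refine Finset.card_le_card_of_injOn (fun a => [a]) ?_ ?_
        · intro a _
          refine Finset.mem_filter.mpr ⟨(hmemT _).mpr (hU.2.1 a), ?_⟩
          refine Kord_lt_of_length ?_
          simp only [List.length_cons, List.length_nil]
          omega
        · intro a _ b _ h
          injection h
      have key : ∀ a b : List X, a ∈ U → b ∈ U → Kord a < Kord b →
          Kord b < Kord (u ++ v) → a.length < m → b.length < m →
          a.length + b.length = m → m ≤ Nat.fib (rk T (u ++ v) - (n - 2) + 1) := by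
        intro a b ha hb hKab hKbw halt hblt habm
        have hrab : rk T a < rk T b := rk_lt_rk T ((hmemT _).mpr ha) hKab
        have hrbw : rk T b < rk T (u ++ v) := rk_lt_rk T ((hmemT _).mpr hb) hKbw
        have iha := ih a.length (by omega) a ha rfl
        have ihb := ih b.length (by omega) b hb rfl
        set c := n - 2 with hc
        set M := rk T (u ++ v) - c with hM
        have hM2 : 2 ≤ M := by omega
        have hfa : Nat.fib (rk T a - c + 1) ≤ Nat.fib (M - 1) :=
          Nat.fib_mono (by omega)
        have hfb : Nat.fib (rk T b - c + 1) ≤ Nat.fib M :=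
          Nat.fib_mono (by omega)
        have hfib : Nat.fib (M - 1) + Nat.fib M = Nat.fib (M + 1) := by
          have h0 := Nat.fib_add_two (n := M - 1)
          rw [show M - 1 + 2 = M + 1 by omega, show M - 1 + 1 = M by omega] at h0
          omega
        have : rk T (u ++ v) - c + 1 = M + 1 := by omega
        rw [this]
        omega
      rcases lt_or_gt_of_ne hKne with hK | hK
      · exact hlen ▸ key u v hu hv hK (Kord_lt_of_length (by omega)) (by omega)
          (by omega) hlen'
      · exact hlen ▸ key v u hv hu hK (Kord_lt_of_length (by omega)) (by omega)
          (by omega) (by omega)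

lemma sum_fib_aux (c : ℕ) : ∀ d : ℕ,
    (∑ j ∈ Finset.range d, Nat.fib (j - c + 1)) + 1 = min d c + Nat.fib (d - c + 2) := by
  intro d
  induction d with
  | zero => simp
  | succ d ihd =>
    rw [Finset.sum_range_succ]
    by_cases hdc : d < c
    · have h1 : d - c = 0 := by omega
      have h2 : d + 1 - c = 0 := by omega
      have h3 : d - c + 1 = 1 := by omega
      rw [h3, Nat.fib_one]
      rw [h1] at ihd
      rw [h2]
      simp only [Nat.fib_add_two, Nat.fib_zero, Nat.fib_one] at ihd ⊢
      omega
    · have h1 : d + 1 - c = (d - c) + 1 := by omega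
      rw [h1]
      have h2 := Nat.fib_add_two (n := d - c + 1)
      have h3 : d - c + 1 + 2 = d - c + 1 + 2 := rfl
      have h4 : d - c + 1 + 1 = d - c + 2 := by omega
      rw [h4] at h2
      omega

theorem sum_deg_closed_set_le {X : Type*} [LinearOrder X] [Fintype X] (n d : ℕ)
    (hn : Fintype.card X = n) (U : Set (List X)) (hU : IsClosedSet U) (hfin : U.Finite)
    (hd : U.ncard = d) :
    (∑ u ∈ hfin.toFinset, (u.length : ℝ)) ≤
      (((1 + Real.sqrt 5) / 2) ^ (d - n + 4) - ((1 - Real.sqrt 5) / 2) ^ (d - n + 4)) /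
        ((1 + Real.sqrt 5) / 2 - (1 - Real.sqrt 5) / 2) + n - 3 := by
  classical
  set T := hfin.toFinset with hT
  have hmemT : ∀ x : List X, x ∈ T ↔ x ∈ U := fun x => Set.Finite.mem_toFinset hfin
  have hdcard : T.card = d := by
    rw [← hd, hT, Set.ncard_eq_toFinset_card _ hfin]
  -- rewrite the RHS using Binet
  have hphi : ((1 + Real.sqrt 5) / 2 - (1 - Real.sqrt 5) / 2) = Real.sqrt 5 := by ring
  have hbinet : (((1 + Real.sqrt 5) / 2) ^ (d - n + 4) - ((1 - Real.sqrt 5) / 2) ^ (d - n + 4)) /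
        ((1 + Real.sqrt 5) / 2 - (1 - Real.sqrt 5) / 2) = (Nat.fib (d - n + 4) : ℝ) := by
    rw [hphi, Real.coe_fib_eq]
  rw [hbinet]
  -- the natural number sum
  have hcast : (∑ u ∈ T, (u.length : ℝ)) = ((∑ u ∈ T, u.length : ℕ) : ℝ) := by
    rw [Nat.cast_sum]
  rw [hcast]
  rcases Nat.eq_zero_or_pos n with hn0 | hnpos
  · -- X is empty, U is empty
    have hX : IsEmpty X := by
      rw [← Fintype.card_eq_zero_iff, hn, hn0]
    have hTempty : T = ∅ := by
      rw [Finset.eq_empty_iff_forall_notMem]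
      intro x hx
      have hxU := (hmemT x).mp hx
      have := (hU.1 x hxU).1
      cases x with
      | nil => exact this rfl
      | cons a _ => exact hX.elim a
    have hd0 : d = 0 := by rw [← hdcard, hTempty]; simp
    subst hd0
    rw [hn0, hTempty]
    norm_num [Nat.fib]
  · -- main case
    have hdn : n ≤ d := by
      rw [← hdcard, ← hn, ← Finset.card_univ]
      refine Finset.card_le_card_of_injOn (fun a => [a]) ?_ ?_
      · exact fun a _ => (hmemT _).mpr (hU.2.1 a)
      · intro a _ b _ h; injection h
    set c := n - 2 with hc
    -- bound each length by fib of rank, then sum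
    have hrk_inj : Set.InjOn (rk T) T := by
      intro x hx y hy hxy
      by_contra hne
      have hKne : Kord x ≠ Kord y := fun h => hne (Kord_inj h)
      rcases lt_or_gt_of_ne hKne with h | h
      · exact absurd hxy (Nat.ne_of_lt (rk_lt_rk T hx h))
      · exact absurd hxy.symm (Nat.ne_of_lt (rk_lt_rk T hy h))
    have hsum1 : (∑ u ∈ T, u.length) ≤ ∑ u ∈ T, Nat.fib (rk T u - c + 1) :=
      Finset.sum_le_sum fun u hu => length_le_fib hn hU hfin u ((hmemT u).mp hu)
    have hsum2 : (∑ u ∈ T, Nat.fib (rk T u - c + 1)) ≤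
        ∑ j ∈ Finset.range d, Nat.fib (j - c + 1) := by
      have himg : ∑ u ∈ T, Nat.fib (rk T u - c + 1) =
          ∑ j ∈ T.image (rk T), Nat.fib (j - c + 1) :=
        (Finset.sum_image (g := rk T) (f := fun j => Nat.fib (j - c + 1))
          fun x hx y hy h => hrk_inj hx hy h).symm
      rw [himg]
      refine Finset.sum_le_sum_of_subset ?_
      intro j hj
      obtain ⟨x, hx, rfl⟩ := Finset.mem_image.mp hj
      rw [Finset.mem_range]
      have := rk_le_of_mem T hx
      omega
    have hsum3 := sum_fib_aux c d
    -- conclude over ℕ: sum + 3 ≤ fib (d - n + 4) + n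
    have hnat : (∑ u ∈ T, u.length) + 3 ≤ Nat.fib (d - n + 4) + n := by
      rcases Nat.lt_or_ge n 2 with hn2 | hn2
      · -- n = 1
        have hmin : min d c = 0 := by omega
        have hidx2 : d - c + 2 = d + 2 := by omega
        rw [hmin, hidx2] at hsum3
        have hfib3 : Nat.fib (d + 3) = Nat.fib (d + 1) + Nat.fib (d + 2) :=
          Nat.fib_add_two (n := d + 1)
        have hfibpos : 0 < Nat.fib (d + 1) := Nat.fib_pos.mpr (by omega)
        have hidx : d - n + 4 = d + 3 := by omega
        rw [hidx]
        omega
      · have hmin : min d c = c := by omega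
        rw [hmin] at hsum3
        have hidx : d - c + 2 = d - n + 4 := by omega
        rw [hidx] at hsum3
        omega
    have hreal : ((∑ u ∈ T, u.length : ℕ) : ℝ) + 3 ≤ (Nat.fib (d - n + 4) : ℝ) + (n : ℝ) := by
      exact_mod_cast hnat
    linarith
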